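/- arXiv:2306.00700 — 12 statements merged into one kernel-verified Lean document; each statement's English description precedes it below -/
import Mathlib

section
/- In the discrete auto rate-tuning model, the effective learning rate ratio of two layers is stationary exactly at 1: for any time step i, one has R(j) = R(i) for all j ≥ i if and only if R(i) = 1. -/
/-!
Scaling the two sequences by the constants, `p = c_k σ_ℓ²` and `q = c_ℓ σ_k²` both follow the
same map `x ↦ x + A / x` with `A = (λ c_ℓ c_k)²`, and `R = q / p`. One step changes the ratio by the
factor `(q² + A) p² / ((p² + A) q²)`, which is `1` exactly when `p = q`, i.e. when `R = 1`; and
`p = q` is preserved by the common map.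
-/

lemma pos_of_succ_eq_add_div {s a : ℕ → ℝ} (h0 : 0 < s 0) (ha : ∀ n, 0 ≤ a n)
    (hs : ∀ n, s (n + 1) = s n + a n / s n) (n : ℕ) : 0 < s n := by
  induction n with
  | zero => exact h0
  | succ n ih => rw [hs n]; have := ha n; positivity

lemma mul_add_sq_mul_sq_div {k s : ℝ} (hk : k ≠ 0) (hs : s ≠ 0) (l c : ℝ) :
    k * (s + l ^ 2 * c ^ 2 / s) = k * s + (l * c * k) ^ 2 / (k * s) := by
  field_simp

lemma add_div_div_add_div_eq_div_iff {A p q : ℝ} (hA : 0 < A) (hp : 0 < p) (hq : 0 < q) :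
    (q + A / q) / (p + A / p) = q / p ↔ q / p = 1 := by
  rw [div_eq_div_iff (by positivity) hp.ne', div_eq_one_iff_eq hp.ne']
  have hsq : (q + A / q) * p = q * (p + A / p) ↔ q ^ 2 = p ^ 2 := by
    field_simp
    constructor
    · intro h
      exact mul_left_cancel₀ hA.ne' (by linear_combination -h)
    · intro h
      linear_combination (-A) * h
  rw [hsq, sq_eq_sq₀ hq.le hp.le]

/-- Discrete auto rate-tuning model: the effective learning rate ratio of two
layers is stationary exactly at 1. -/
theorem elr_ratio_stationary_iff_one
    (cl ck : ℝ) (hcl : 0 < cl) (hck : 0 < ck)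
    (lam : ℕ → ℝ) (hlam : ∀ i, 0 < lam i)
    (sl sk : ℕ → ℝ) (hsl0 : 0 < sl 0) (hsk0 : 0 < sk 0)
    (hsl : ∀ i, sl (i + 1) = sl i + (lam i) ^ 2 * cl ^ 2 / sl i)
    (hsk : ∀ i, sk (i + 1) = sk i + (lam i) ^ 2 * ck ^ 2 / sk i)
    (R : ℕ → ℝ) (hR : ∀ i, R i = cl * sk i / (ck * sl i))
    (i : ℕ) :
    (∀ j, i ≤ j → R j = R i) ↔ R i = 1 := by
  have hslpos := pos_of_succ_eq_add_div hsl0 (fun n => by positivity) hsl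
  have hskpos := pos_of_succ_eq_add_div hsk0 (fun n => by positivity) hsk
  have step (n : ℕ) : R (n + 1) = R n ↔ R n = 1 := by
    rw [hR, hR, hsl, hsk, mul_add_sq_mul_sq_div hcl.ne' (hskpos n).ne',
      mul_add_sq_mul_sq_div hck.ne' (hslpos n).ne', mul_right_comm (lam n) ck cl]
    exact add_div_div_add_div_eq_div_iff (by have := hlam n; positivity)
      (mul_pos hck (hslpos n)) (mul_pos hcl (hskpos n))
  refine ⟨fun h => (step i).1 (h (i + 1) i.le_succ), fun h1 j hj => ?_⟩
  induction j, hj using Nat.le_induction with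
  | base => rfl
  | succ n _ ih => exact ((step n).2 (ih.trans h1)).trans ih
end

section
/- In the discrete auto rate-tuning model, if the effective learning rate ratio exceeds 1 at time step i, i.e. R(i) > 1, then it strictly decreases in the next step: R(i+1) < R(i). -/
/-!
Writing `σ²(i+1) = σ²(i) · (1 + (λ(i) c / σ²(i))²)`, the ratio evolves multiplicatively:
`R(i+1) = R(i) · (1 + (λ c_k / σ_k²)²) / (1 + (λ c_ℓ / σ_ℓ²)²)`.
Since `R(i) = (c_ℓ / σ_ℓ²) / (c_k / σ_k²)`, the condition `R(i) > 1` says that the `ℓ`-term in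
the denominator dominates the `k`-term in the numerator, so the factor is `< 1`.
-/

section

variable {K : Type*} [Field K] [LinearOrder K] [IsStrictOrderedRing K]

theorem add_sq_mul_sq_div_eq_mul_one_add_sq {s : K} (hs : s ≠ 0) (l c : K) :
    s + l ^ 2 * c ^ 2 / s = s * (1 + (l * (c / s)) ^ 2) := by
  field_simp

theorem sq_lt_sq_of_one_lt_div {u v : K} (h : 1 < v / u) : u ^ 2 < v ^ 2 := by
  have hu : u ≠ 0 := by
    rintro rfl
    norm_num at h
  rw [sq_lt_sq, ← one_lt_div (abs_pos.mpr hu), ← abs_div]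
  exact h.trans_le (le_abs_self _)

theorem one_add_sq_div_one_add_sq_lt_one {l u v : K} (hl : l ≠ 0) (h : 1 < v / u) :
    (1 + (l * u) ^ 2) / (1 + (l * v) ^ 2) < 1 := by
  have hsq : (l * u) ^ 2 < (l * v) ^ 2 := by
    rw [mul_pow, mul_pow]
    exact mul_lt_mul_of_pos_left (sq_lt_sq_of_one_lt_div h) (by positivity)
  rw [div_lt_one (by positivity)]
  linarith

end

theorem elr_ratio_gt_one_decreases_general
    (cl ck : ℝ)
    (lam : ℕ → ℝ) (hlam : ∀ i, 0 < lam i)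
    (sl sk : ℕ → ℝ)
    (hsl : ∀ i, sl (i + 1) = sl i + (lam i) ^ 2 * cl ^ 2 / sl i)
    (hsk : ∀ i, sk (i + 1) = sk i + (lam i) ^ 2 * ck ^ 2 / sk i)
    (R : ℕ → ℝ) (hR : ∀ i, R i = cl * sk i / (ck * sl i))
    (i : ℕ) (hRi : 1 < R i) :
    R (i + 1) < R i := by
  have hR_pos : 0 < R i := zero_lt_one.trans hRi
  obtain ⟨⟨-, hsk_ne⟩, -, hsl_ne⟩ : (cl ≠ 0 ∧ sk i ≠ 0) ∧ ck ≠ 0 ∧ sl i ≠ 0 := by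
    simpa only [hR, div_ne_zero_iff, mul_ne_zero_iff] using hR_pos.ne'
  have hR_succ : R (i + 1) = R i *
      ((1 + (lam i * (ck / sk i)) ^ 2) / (1 + (lam i * (cl / sl i)) ^ 2)) := by
    rw [hR, hR, hsl, hsk, add_sq_mul_sq_div_eq_mul_one_add_sq hsl_ne,
      add_sq_mul_sq_div_eq_mul_one_add_sq hsk_ne, ← mul_assoc, ← mul_assoc, mul_div_mul_comm]
  have hR_eq : R i = (cl / sl i) / (ck / sk i) := by
    rw [hR, div_div_div_eq, mul_comm (sl i)]
  rw [hR_succ]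
  exact mul_lt_of_lt_one_right hR_pos
    (one_add_sq_div_one_add_sq_lt_one (hlam i).ne' (hR_eq ▸ hRi))

/-- Discrete auto rate-tuning model: if the ELR ratio exceeds 1, it strictly
decreases in the next step. -/
theorem elr_ratio_gt_one_decreases
    (cl ck : ℝ) (hcl : 0 < cl) (hck : 0 < ck)
    (lam : ℕ → ℝ) (hlam : ∀ i, 0 < lam i)
    (sl sk : ℕ → ℝ) (hsl0 : 0 < sl 0) (hsk0 : 0 < sk 0)
    (hsl : ∀ i, sl (i + 1) = sl i + (lam i) ^ 2 * cl ^ 2 / sl i)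
    (hsk : ∀ i, sk (i + 1) = sk i + (lam i) ^ 2 * ck ^ 2 / sk i)
    (R : ℕ → ℝ) (hR : ∀ i, R i = cl * sk i / (ck * sl i))
    (i : ℕ) (hRi : 1 < R i) :
    R (i + 1) < R i :=
  elr_ratio_gt_one_decreases_general cl ck lam hlam sl sk hsl hsk R hR i hRi
end

section
/- In the discrete auto rate-tuning model, if the effective learning rate ratio is below 1 at time step i, i.e. R(i) < 1, then it strictly increases in the next step: R(i+1) > R(i). -/
/-!
Write `a = σ_ℓ²(i)`, `b = σ_k²(i)` and `L = λ(i)²`. One step adds `L c_ℓ²/a` to `a` and `L c_k²/b`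
to `b`, and `a σ_k²(i+1) - b σ_ℓ²(i+1) = L (c_k a - c_ℓ b)(c_k a + c_ℓ b) / (a b)`. So the ratio
`σ_k²/σ_ℓ²`, and with it `R`, grows exactly when `c_ℓ b < c_k a`, i.e. when `R(i) < 1`.
-/

lemma pos_of_succ_eq_add_div_s2 {s d : ℕ → ℝ} (h0 : 0 < s 0) (hd : ∀ i, 0 ≤ d i)
    (hs : ∀ i, s (i + 1) = s i + d i / s i) (i : ℕ) : 0 < s i := by
  induction i with
  | zero => exact h0
  | succ i ih =>
    rw [hs i]
    exact add_pos_of_pos_of_nonneg ih (div_nonneg (hd i) ih.le)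

lemma mul_add_div_sub_mul_add_div {a b : ℝ} (ha : a ≠ 0) (hb : b ≠ 0) (L cl ck : ℝ) :
    a * (b + L * ck ^ 2 / b) - b * (a + L * cl ^ 2 / a)
      = L * (ck * a - cl * b) * (ck * a + cl * b) / (a * b) := by
  field_simp
  ring

lemma div_lt_div_add_div_of_mul_lt {a b L cl ck : ℝ} (ha : 0 < a) (hb : 0 < b) (hL : 0 < L)
    (hcl : 0 < cl) (hck : 0 < ck) (hlt : cl * b < ck * a) :
    cl * b / (ck * a) < cl * (b + L * ck ^ 2 / b) / (ck * (a + L * cl ^ 2 / a)) := by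
  have hgap : 0 < a * (b + L * ck ^ 2 / b) - b * (a + L * cl ^ 2 / a) := by
    rw [mul_add_div_sub_mul_add_div ha.ne' hb.ne']
    have := sub_pos.mpr hlt
    positivity
  rw [div_lt_div_iff₀ (by positivity) (by positivity)]
  nlinarith [mul_pos hcl hck]

/-- Discrete auto rate-tuning model: if the ELR ratio is below 1, it strictly
increases in the next step. -/
theorem elr_ratio_lt_one_increases
    (cl ck : ℝ) (hcl : 0 < cl) (hck : 0 < ck)
    (lam : ℕ → ℝ) (hlam : ∀ i, 0 < lam i)
    (sl sk : ℕ → ℝ) (hsl0 : 0 < sl 0) (hsk0 : 0 < sk 0)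
    (hsl : ∀ i, sl (i + 1) = sl i + (lam i) ^ 2 * cl ^ 2 / sl i)
    (hsk : ∀ i, sk (i + 1) = sk i + (lam i) ^ 2 * ck ^ 2 / sk i)
    (R : ℕ → ℝ) (hR : ∀ i, R i = cl * sk i / (ck * sl i))
    (i : ℕ) (hRi : R i < 1) :
    R i < R (i + 1) := by
  have hsl_pos := pos_of_succ_eq_add_div_s2 hsl0 (fun j => by positivity) hsl i
  have hsk_pos := pos_of_succ_eq_add_div_s2 hsk0 (fun j => by positivity) hsk i
  have hlt : cl * sk i < ck * sl i := by
    rwa [hR i, div_lt_one (by positivity)] at hRi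
  rw [hR i, hR (i + 1), hsl i, hsk i]
  exact div_lt_div_add_div_of_mul_lt hsl_pos hsk_pos (pow_pos (hlam i) 2) hcl hck hlt
end

section
/- Flipping condition (non-flip): in the discrete auto rate-tuning model, suppose R(i) > 1 at time step i. Then the ratio does not flip in the next step, i.e. R(i+1) > 1, if and only if the learning rate satisfies λ(i) < κ(i). -/
/-!
Writing `x = σ_ℓ²(i)`, `y = σ_k²(i)` and `a = λ(i)²`, one step of the update changes the
gap `c_ℓ y - c_k x` by the factor `(x y - a c_ℓ c_k) / (x y)`. So a positive gap stays positive
exactly when `a c_ℓ c_k < x y`, which after taking square roots is `λ(i) < κ(i)`.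
-/

lemma pos_of_add_sq_div {s lam : ℕ → ℝ} {c : ℝ} (h0 : 0 < s 0)
    (hs : ∀ n, s (n + 1) = s n + lam n ^ 2 * c ^ 2 / s n) (n : ℕ) : 0 < s n := by
  induction n with
  | zero => exact h0
  | succ n ih => rw [hs]; positivity

lemma gap_add_sq_div_eq {x y : ℝ} (hx : x ≠ 0) (hy : y ≠ 0) (cl ck a : ℝ) :
    cl * (y + a * ck ^ 2 / y) - ck * (x + a * cl ^ 2 / x)
      = (cl * y - ck * x) * (x * y - a * (cl * ck)) / (x * y) := by
  field_simp
  ring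

lemma gap_add_sq_div_pos_iff {x y cl ck : ℝ} (hx : 0 < x) (hy : 0 < y)
    (hgap : ck * x < cl * y) (a : ℝ) :
    ck * (x + a * cl ^ 2 / x) < cl * (y + a * ck ^ 2 / y) ↔ a * (cl * ck) < x * y := by
  rw [← sub_pos, gap_add_sq_div_eq hx.ne' hy.ne', div_pos_iff_of_pos_right (by positivity),
    mul_pos_iff_of_pos_left (sub_pos.mpr hgap), sub_pos]

lemma lt_sqrt_mul_div_sqrt_iff {lam x y c : ℝ} (hlam : 0 ≤ lam) (hx : 0 ≤ x) (hy : 0 ≤ y)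
    (hc : 0 < c) :
    lam < √x * √y / √c ↔ lam ^ 2 * c < x * y := by
  rw [← Real.sqrt_mul hx, ← Real.sqrt_div (mul_nonneg hx hy), Real.lt_sqrt hlam,
    lt_div_iff₀ hc]

/-- Flipping condition (non-flip): if `R i > 1`, then `R (i+1) > 1` iff the
learning rate is below the flipping ratio. -/
theorem elr_ratio_no_flip_iff
    (cl ck : ℝ) (hcl : 0 < cl) (hck : 0 < ck)
    (lam : ℕ → ℝ) (hlam : ∀ i, 0 < lam i)
    (sl sk : ℕ → ℝ) (hsl0 : 0 < sl 0) (hsk0 : 0 < sk 0)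
    (hsl : ∀ i, sl (i + 1) = sl i + (lam i) ^ 2 * cl ^ 2 / sl i)
    (hsk : ∀ i, sk (i + 1) = sk i + (lam i) ^ 2 * ck ^ 2 / sk i)
    (R : ℕ → ℝ) (hR : ∀ i, R i = cl * sk i / (ck * sl i))
    (kap : ℕ → ℝ)
    (hkap : ∀ i, kap i = Real.sqrt (sl i) * Real.sqrt (sk i) / Real.sqrt (cl * ck))
    (i : ℕ) (hRi : 1 < R i) :
    1 < R (i + 1) ↔ lam i < kap i := by
  have hsl_pos := pos_of_add_sq_div hsl0 hsl
  have hsk_pos := pos_of_add_sq_div hsk0 hsk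
  have hgap : ck * sl i < cl * sk i := by
    rwa [hR, one_lt_div (mul_pos hck (hsl_pos i))] at hRi
  rw [hR, one_lt_div (mul_pos hck (hsl_pos (i + 1))), hsl, hsk,
    gap_add_sq_div_pos_iff (hsl_pos i) (hsk_pos i) hgap, hkap,
    lt_sqrt_mul_div_sqrt_iff (hlam i).le (hsl_pos i).le (hsk_pos i).le (mul_pos hcl hck)]
end

section
/- Flipping condition (critical step): in the discrete auto rate-tuning model, suppose R(i) > 1 at time step i. Then R(i+1) = 1 if and only if λ(i) = κ(i); moreover, if λ(i) = κ(i) then R(j) = 1 for all j ≥ i+1. -/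
/-!
Write `D n := c_ℓ σ_k²(n) - c_k σ_ℓ²(n)`, so that `R n = 1 ↔ D n = 0`. The update rule gives
`D (n+1) = D n * (1 - λ(n)² c_ℓ c_k / (σ_ℓ²(n) σ_k²(n)))`, and the second factor vanishes exactly
when `λ(n) = κ(n)`. Hence, starting from `D i ≠ 0`, the ratio becomes `1` at step `i+1` iff
`λ(i) = κ(i)`, and once `D` vanishes it stays zero.
-/

theorem pos_of_rate_recurrence {c : ℝ} {lam s : ℕ → ℝ} (h0 : 0 < s 0)
    (hs : ∀ n, s (n + 1) = s n + lam n ^ 2 * c ^ 2 / s n) (n : ℕ) : 0 < s n := by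
  induction n with
  | zero => exact h0
  | succ n ih => rw [hs]; positivity

theorem mul_sub_mul_rate_update (cl ck t : ℝ) {a b : ℝ} (ha : a ≠ 0) (hb : b ≠ 0) :
    cl * (b + t * ck ^ 2 / b) - ck * (a + t * cl ^ 2 / a)
      = (cl * b - ck * a) * (1 - t * cl * ck / (a * b)) := by
  field_simp
  ring

theorem eq_sqrt_mul_sqrt_div_sqrt_iff {t a b c : ℝ} (ht : 0 ≤ t) (ha : 0 ≤ a) (hb : 0 ≤ b)
    (hc : 0 < c) : t = √a * √b / √c ↔ t ^ 2 * c = a * b := by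
  rw [← Real.sqrt_mul ha, ← Real.sqrt_div' _ hc.le, eq_comm,
    Real.sqrt_eq_iff_eq_sq (by positivity) ht, div_eq_iff hc.ne', eq_comm]

section RateTuning

variable {cl ck : ℝ} {lam sl sk : ℕ → ℝ}
  (hsl : ∀ n, sl (n + 1) = sl n + lam n ^ 2 * cl ^ 2 / sl n)
  (hsk : ∀ n, sk (n + 1) = sk n + lam n ^ 2 * ck ^ 2 / sk n)
include hsl hsk

theorem imbalance_succ {n : ℕ} (hl : sl n ≠ 0) (hk : sk n ≠ 0) :
    cl * sk (n + 1) - ck * sl (n + 1)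
      = (cl * sk n - ck * sl n) * (1 - lam n ^ 2 * cl * ck / (sl n * sk n)) := by
  rw [hsl, hsk, mul_sub_mul_rate_update _ _ _ hl hk]

theorem balanced_succ_iff {n : ℕ} (hl : sl n ≠ 0) (hk : sk n ≠ 0)
    (hn : cl * sk n ≠ ck * sl n) :
    cl * sk (n + 1) = ck * sl (n + 1) ↔ lam n ^ 2 * (cl * ck) = sl n * sk n := by
  rw [← sub_eq_zero, imbalance_succ hsl hsk hl hk, mul_eq_zero, or_iff_right (sub_ne_zero.2 hn),
    sub_eq_zero, eq_comm, div_eq_one_iff_eq (mul_ne_zero hl hk), mul_assoc]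

theorem balanced_of_le (hl : ∀ n, sl n ≠ 0) (hk : ∀ n, sk n ≠ 0) {i j : ℕ}
    (hi : cl * sk i = ck * sl i) (hij : i ≤ j) : cl * sk j = ck * sl j := by
  induction j, hij using Nat.le_induction with
  | base => exact hi
  | succ n _ ih =>
    rw [← sub_eq_zero, imbalance_succ hsl hsk (hl n) (hk n), sub_eq_zero.2 ih, zero_mul]

end RateTuning

/-- Flipping condition (critical step): if `R i > 1`, then `R (i+1) = 1` iff
`λ i = κ i`; moreover in that case the ratio stays at 1 forever. -/
theorem elr_ratio_critical_step
    (cl ck : ℝ) (hcl : 0 < cl) (hck : 0 < ck)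
    (lam : ℕ → ℝ) (hlam : ∀ i, 0 < lam i)
    (sl sk : ℕ → ℝ) (hsl0 : 0 < sl 0) (hsk0 : 0 < sk 0)
    (hsl : ∀ i, sl (i + 1) = sl i + (lam i) ^ 2 * cl ^ 2 / sl i)
    (hsk : ∀ i, sk (i + 1) = sk i + (lam i) ^ 2 * ck ^ 2 / sk i)
    (R : ℕ → ℝ) (hR : ∀ i, R i = cl * sk i / (ck * sl i))
    (kap : ℕ → ℝ)
    (hkap : ∀ i, kap i = Real.sqrt (sl i) * Real.sqrt (sk i) / Real.sqrt (cl * ck))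
    (i : ℕ) (hRi : 1 < R i) :
    (R (i + 1) = 1 ↔ lam i = kap i) ∧
      (lam i = kap i → ∀ j, i + 1 ≤ j → R j = 1) := by
  have hl := pos_of_rate_recurrence hsl0 hsl
  have hk := pos_of_rate_recurrence hsk0 hsk
  have hR_eq_one : ∀ n, R n = 1 ↔ cl * sk n = ck * sl n := fun n => by
    have := hl n
    rw [hR, div_eq_one_iff_eq (by positivity)]
  have h_unbalanced : cl * sk i ≠ ck * sl i := fun h => hRi.ne' ((hR_eq_one i).2 h)
  have h_critical : R (i + 1) = 1 ↔ lam i = kap i := by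
    rw [hR_eq_one, balanced_succ_iff hsl hsk (hl i).ne' (hk i).ne' h_unbalanced, hkap,
      eq_sqrt_mul_sqrt_div_sqrt_iff (hlam i).le (hl i).le (hk i).le (mul_pos hcl hck)]
  refine ⟨h_critical, fun h j hj => (hR_eq_one j).2 ?_⟩
  exact balanced_of_le hsl hsk (fun n => (hl n).ne') (fun n => (hk n).ne')
    ((hR_eq_one _).1 (h_critical.2 h)) hj
end

section
/- Ratios flip at most once (no-flip persists): in the discrete auto rate-tuning model with a constant learning rate, if R(i) > 1 and the ratio does not flip between steps i and i+1 (i.e. R(i+1) > 1), then R(i+j) > 1 for all j ≥ 1; the ratio never flips at any later step. -/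
/-!
Write `D n = c_ℓ σ_k²(n) - c_k σ_ℓ²(n)`, so that `R n > 1` iff `D n > 0`. For `a = σ_ℓ²(n)`,
`b = σ_k²(n)` one step of the update multiplies `D` by the factor `1 - λ² c_ℓ c_k / (a b)`.
After the first step AM–GM gives `a ≥ 2 |λ c_ℓ|` and `b ≥ 2 |λ c_k|`, so `a b ≥ 4 |λ² c_ℓ c_k|` and
the factor is positive: from step `1` on, the sign of `D` never changes.
-/

lemma two_mul_abs_le_add_sq_div {a : ℝ} (ha : 0 < a) (c : ℝ) : 2 * |c| ≤ a + c ^ 2 / a := by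
  have h : a + c ^ 2 / a - 2 * |c| = (a - |c|) ^ 2 / a := by
    field_simp
    rw [← sq_abs c]
    ring
  have : 0 ≤ (a - |c|) ^ 2 / a := by positivity
  linarith

lemma mul_add_sq_div_sub_mul_add_sq_div (cl ck lam : ℝ) {a b : ℝ} (ha : a ≠ 0) (hb : b ≠ 0) :
    cl * (b + lam ^ 2 * ck ^ 2 / b) - ck * (a + lam ^ 2 * cl ^ 2 / a)
      = (cl * b - ck * a) * (1 - lam ^ 2 * cl * ck / (a * b)) := by
  field_simp
  ring

section Step

variable {s : ℕ → ℝ} {c lam : ℝ} (hs : ∀ n, s (n + 1) = s n + lam ^ 2 * c ^ 2 / s n)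
include hs

lemma pos_of_step (h0 : 0 < s 0) (n : ℕ) : 0 < s n := by
  induction n with
  | zero => exact h0
  | succ n ih =>
    rw [hs n]
    positivity

lemma two_mul_abs_le_of_step (h0 : 0 < s 0) (n : ℕ) : 2 * |lam * c| ≤ s (n + 1) := by
  rw [hs n, ← mul_pow]
  exact two_mul_abs_le_add_sq_div (pos_of_step hs h0 n) _

end Step

lemma mul_lt_mul_succ_of_step {sl sk : ℕ → ℝ} {cl ck lam : ℝ}
    (hsl : ∀ n, sl (n + 1) = sl n + lam ^ 2 * cl ^ 2 / sl n)
    (hsk : ∀ n, sk (n + 1) = sk n + lam ^ 2 * ck ^ 2 / sk n)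
    (hsl0 : 0 < sl 0) (hsk0 : 0 < sk 0) {n : ℕ} (hn : 0 < n)
    (h : ck * sl n < cl * sk n) : ck * sl (n + 1) < cl * sk (n + 1) := by
  obtain ⟨m, rfl⟩ : ∃ m, n = m + 1 := ⟨n - 1, by omega⟩
  set a := sl (m + 1)
  set b := sk (m + 1)
  have ha : 0 < a := pos_of_step hsl hsl0 _
  have hb : 0 < b := pos_of_step hsk hsk0 _
  have hab : lam ^ 2 * cl * ck < a * b := by
    have hbound : 2 * |lam * cl| * (2 * |lam * ck|) ≤ a * b :=
      mul_le_mul (two_mul_abs_le_of_step hsl hsl0 m) (two_mul_abs_le_of_step hsk hsk0 m)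
        (by positivity) ha.le
    have hle : lam ^ 2 * cl * ck ≤ |lam * cl| * |lam * ck| := by
      rw [← abs_mul]
      exact (le_abs_self _).trans_eq' (by ring)
    linarith [mul_pos ha hb]
  have hfactor : 0 < 1 - lam ^ 2 * cl * ck / (a * b) := by
    rwa [sub_pos, div_lt_one (mul_pos ha hb)]
  rw [← sub_pos, hsl, hsk, mul_add_sq_div_sub_mul_add_sq_div cl ck lam ha.ne' hb.ne']
  exact mul_pos (sub_pos.mpr h) hfactor

theorem elr_ratio_no_flip_persists_general
    (cl ck : ℝ) (hck : 0 < ck)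
    (lam : ℝ)
    (sl sk : ℕ → ℝ) (hsl0 : 0 < sl 0) (hsk0 : 0 < sk 0)
    (hsl : ∀ i, sl (i + 1) = sl i + lam ^ 2 * cl ^ 2 / sl i)
    (hsk : ∀ i, sk (i + 1) = sk i + lam ^ 2 * ck ^ 2 / sk i)
    (R : ℕ → ℝ) (hR : ∀ i, R i = cl * sk i / (ck * sl i))
    (i : ℕ) (hRi1 : 1 < R (i + 1)) :
    ∀ j, 1 ≤ j → 1 < R (i + j) := by
  have one_lt_R_iff (n : ℕ) : 1 < R n ↔ ck * sl n < cl * sk n := by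
    rw [hR n, one_lt_div (mul_pos hck (pos_of_step hsl hsl0 n))]
  intro j hj
  induction j, hj using Nat.le_induction with
  | base => exact hRi1
  | succ j hj ih =>
    rw [one_lt_R_iff] at ih ⊢
    exact mul_lt_mul_succ_of_step hsl hsk hsl0 hsk0 (n := i + j) (by omega) ih

/-- Ratios flip at most once (no-flip persists): with a constant learning rate,
if `R i > 1` and `R (i+1) > 1`, then `R (i+j) > 1` for all `j ≥ 1`. -/
theorem elr_ratio_no_flip_persists
    (cl ck : ℝ) (hcl : 0 < cl) (hck : 0 < ck)
    (lam : ℝ) (hlam : 0 < lam)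
    (sl sk : ℕ → ℝ) (hsl0 : 0 < sl 0) (hsk0 : 0 < sk 0)
    (hsl : ∀ i, sl (i + 1) = sl i + lam ^ 2 * cl ^ 2 / sl i)
    (hsk : ∀ i, sk (i + 1) = sk i + lam ^ 2 * ck ^ 2 / sk i)
    (R : ℕ → ℝ) (hR : ∀ i, R i = cl * sk i / (ck * sl i))
    (i : ℕ) (hRi : 1 < R i) (hRi1 : 1 < R (i + 1)) :
    ∀ j, 1 ≤ j → 1 < R (i + j) :=
  elr_ratio_no_flip_persists_general cl ck hck lam sl sk hsl0 hsk0 hsl hsk R hR i hRi1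
end

section
/- Ratios flip at most once (at most one flip): in the discrete auto rate-tuning model with a constant learning rate, if R(i) > 1 and the ratio flips between steps i and i+1 (i.e. R(i+1) < 1), then R(i+j) < 1 for all j ≥ 1; the ratio never flips again at any later step. -/
/-- Ratios flip at most once: with a constant learning rate, if `R i > 1` and
the ratio flips (`R (i+1) < 1`), then `R (i+j) < 1` for all `j ≥ 1`. -/
theorem elr_ratio_flips_at_most_once
    (cl ck : ℝ) (hcl : 0 < cl) (hck : 0 < ck)
    (lam : ℝ) (hlam : 0 < lam)
    (sl sk : ℕ → ℝ) (hsl0 : 0 < sl 0) (hsk0 : 0 < sk 0)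
    (hsl : ∀ i, sl (i + 1) = sl i + lam ^ 2 * cl ^ 2 / sl i)
    (hsk : ∀ i, sk (i + 1) = sk i + lam ^ 2 * ck ^ 2 / sk i)
    (R : ℕ → ℝ) (hR : ∀ i, R i = cl * sk i / (ck * sl i))
    (i : ℕ) (hRi : 1 < R i) (hRi1 : R (i + 1) < 1) :
    ∀ j, 1 ≤ j → R (i + j) < 1 := by
  -- positivity of the sequences
  have hslpos : ∀ n, 0 < sl n := by
    intro n
    induction n with
    | zero => exact hsl0
    | succ n ih =>
      rw [hsl n]
      positivity
  have hskpos : ∀ n, 0 < sk n := by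
    intro n
    induction n with
    | zero => exact hsk0
    | succ n ih =>
      rw [hsk n]
      positivity
  -- AM-GM lower bounds after one step
  have hsllb : ∀ n, 2 * lam * cl ≤ sl (n + 1) := by
    intro n
    have h := hslpos n
    rw [hsl n]
    nlinarith [div_nonneg (sq_nonneg (sl n - lam * cl)) h.le,
      (by field_simp; ring : sl n + lam ^ 2 * cl ^ 2 / sl n - 2 * lam * cl
        = (sl n - lam * cl) ^ 2 / sl n)]
  have hsklb : ∀ n, 2 * lam * ck ≤ sk (n + 1) := by
    intro n
    have h := hskpos n
    rw [hsk n]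
    nlinarith [div_nonneg (sq_nonneg (sk n - lam * ck)) h.le,
      (by field_simp; ring : sk n + lam ^ 2 * ck ^ 2 / sk n - 2 * lam * ck
        = (sk n - lam * ck) ^ 2 / sk n)]
  -- translate R < 1 into an inequality between products
  have hRlt : ∀ n, R n < 1 ↔ cl * sk n < ck * sl n := by
    intro n
    rw [hR n, div_lt_one (mul_pos hck (hslpos n))]
  -- invariance: once below at a step ≥ 1, stays below
  have step : ∀ n, cl * sk (n + 1) < ck * sl (n + 1) →
      cl * sk (n + 2) < ck * sl (n + 2) := by
    intro n h
    have hu := hslpos (n + 1)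
    have hv := hskpos (n + 1)
    have hul := hsllb n
    have hvl := hsklb n
    rw [hsl (n + 1), hsk (n + 1), ← sub_pos]
    have expand : ck * (sl (n+1) + lam ^ 2 * cl ^ 2 / sl (n+1))
        - cl * (sk (n+1) + lam ^ 2 * ck ^ 2 / sk (n+1))
        = ((ck * sl (n+1) - cl * sk (n+1)) * (sl (n+1) * sk (n+1) - lam ^ 2 * cl * ck))
          / (sl (n+1) * sk (n+1)) := by
      field_simp; ring
    rw [expand]
    apply div_pos _ (by positivity)
    apply mul_pos (by linarith)
    have hprod : 2 * lam * cl * (2 * lam * ck) ≤ sl (n+1) * sk (n+1) :=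
      mul_le_mul hul hvl (by positivity) hu.le
    nlinarith [mul_pos (mul_pos (pow_pos hlam 2) hcl) hck]
  intro j hj
  rw [hRlt]
  induction j with
  | zero => omega
  | succ j ih =>
    rcases Nat.eq_or_lt_of_le hj with h1 | h1
    · have : i + j + 1 = i + 1 := by omega
      rw [show i + (j+1) = i + j + 1 from rfl, this]
      exact (hRlt (i+1)).mp hRi1
    · have hj' : 1 ≤ j := by omega
      have := step (i + j - 1)
      have heq : i + j - 1 + 1 = i + j := by omega
      rw [heq] at this
      have heq2 : i + j - 1 + 2 = i + (j + 1) := by omega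
      rw [heq2] at this
      exact this (ih hj')
end

section
/- Convergence to fixed point: in the discrete auto rate-tuning model with a constant learning rate λ > 0, the effective learning rate ratio of any two layers converges to 1 in the infinite time limit: lim_{i→∞} R(i) = 1. -/
/-! Squaring the recurrence `s ↦ s + K / s` gives `s (n+1)² = s n² + 2K + K² / s n²`, and
`s n² ≥ 2Kn` makes the last term vanish, so by Cesàro `s n² / n → 2K`. With `K = λ²c²` this gives
`σ_k⁴ / σ_ℓ⁴ → c_k² / c_ℓ²`, i.e. `R² → 1`, and `R > 0`. -/

open Filter Topology

theorem tendsto_div_natCast_of_tendsto_sub {a : ℕ → ℝ} {L : ℝ}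
    (h : Tendsto (fun n => a (n + 1) - a n) atTop (𝓝 L)) :
    Tendsto (fun n : ℕ => a n / n) atTop (𝓝 L) := by
  have hmean : Tendsto (fun n : ℕ => (n : ℝ)⁻¹ * (a n - a 0)) atTop (𝓝 L) := by
    simpa only [Finset.sum_range_sub] using h.cesaro
  have hinit : Tendsto (fun n : ℕ => a 0 / n) atTop (𝓝 0) :=
    tendsto_const_div_atTop_nhds_zero_nat (a 0)
  refine (add_zero L ▸ hmean.add hinit).congr fun n => ?_
  ring

theorem Filter.Tendsto.of_sq_of_nonneg {α : Type*} {l : Filter α} {f : α → ℝ} {x : ℝ}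
    (hf : ∀ a, 0 ≤ f a) (hx : 0 ≤ x) (h : Tendsto (fun a => f a ^ 2) l (𝓝 (x ^ 2))) :
    Tendsto f l (𝓝 x) := by
  simpa only [Real.sqrt_sq hx, Real.sqrt_sq (hf _)] using h.sqrt

section AddDivRecurrence

variable {K : ℝ} {s : ℕ → ℝ}

theorem pos_of_add_div_rec (hs : ∀ i, s (i + 1) = s i + K / s i) (hK : 0 ≤ K) (hs0 : 0 < s 0)
    (n : ℕ) : 0 < s n := by
  induction n with
  | zero => exact hs0
  | succ n ih => rw [hs]; positivity

theorem sq_succ_of_add_div_rec (hs : ∀ i, s (i + 1) = s i + K / s i) {n : ℕ} (hn : s n ≠ 0) :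
    s (n + 1) ^ 2 = s n ^ 2 + (2 * K + K ^ 2 / s n ^ 2) := by
  rw [hs]
  field_simp
  ring

theorem le_sq_of_add_div_rec (hs : ∀ i, s (i + 1) = s i + K / s i) (hK : 0 ≤ K) (hs0 : 0 < s 0)
    (n : ℕ) :
    2 * K * n ≤ s n ^ 2 := by
  induction n with
  | zero => simpa using sq_nonneg (s 0)
  | succ n ih =>
    have hpos := pos_of_add_div_rec hs hK hs0 n
    rw [sq_succ_of_add_div_rec hs hpos.ne']
    have hcorr : 0 ≤ K ^ 2 / s n ^ 2 := by positivity
    push_cast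
    linarith

theorem tendsto_sq_div_natCast_of_add_div_rec (hs : ∀ i, s (i + 1) = s i + K / s i)
    (hK : 0 < K) (hs0 : 0 < s 0) :
    Tendsto (fun n : ℕ => s n ^ 2 / n) atTop (𝓝 (2 * K)) := by
  have hsq : Tendsto (fun n => s n ^ 2) atTop atTop :=
    tendsto_atTop_mono (le_sq_of_add_div_rec hs hK.le hs0)
      (tendsto_natCast_atTop_atTop.const_mul_atTop (by positivity))
  have hincr : Tendsto (fun n => 2 * K + K ^ 2 / s n ^ 2) atTop (𝓝 (2 * K)) := by
    simpa only [add_zero] using (tendsto_const_nhds.div_atTop hsq).const_add (2 * K)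
  refine tendsto_div_natCast_of_tendsto_sub (hincr.congr fun n => ?_)
  rw [sq_succ_of_add_div_rec hs (pos_of_add_div_rec hs hK.le hs0 n).ne']
  ring

end AddDivRecurrence

/-- Convergence to fixed point: with a constant learning rate, the effective
learning rate ratio of any two layers converges to 1. -/
theorem elr_ratio_tendsto_one
    (cl ck : ℝ) (hcl : 0 < cl) (hck : 0 < ck)
    (lam : ℝ) (hlam : 0 < lam)
    (sl sk : ℕ → ℝ) (hsl0 : 0 < sl 0) (hsk0 : 0 < sk 0)
    (hsl : ∀ i, sl (i + 1) = sl i + lam ^ 2 * cl ^ 2 / sl i)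
    (hsk : ∀ i, sk (i + 1) = sk i + lam ^ 2 * ck ^ 2 / sk i)
    (R : ℕ → ℝ) (hR : ∀ i, R i = cl * sk i / (ck * sl i)) :
    Filter.Tendsto R Filter.atTop (nhds 1) := by
  have hKl : 0 < lam ^ 2 * cl ^ 2 := by positivity
  have hKk : 0 < lam ^ 2 * ck ^ 2 := by positivity
  have hslpos := pos_of_add_div_rec hsl hKl.le hsl0
  have hskpos := pos_of_add_div_rec hsk hKk.le hsk0
  have hRpos (n : ℕ) : 0 ≤ R n := by
    rw [hR]
    exact (div_pos (mul_pos hcl (hskpos n)) (mul_pos hck (hslpos n))).le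
  have hquot := ((tendsto_sq_div_natCast_of_add_div_rec hsk hKk hsk0).div
    (tendsto_sq_div_natCast_of_add_div_rec hsl hKl hsl0) (by positivity)).const_mul
    ((cl / ck) ^ 2)
  have hlim : (cl / ck) ^ 2 * (2 * (lam ^ 2 * ck ^ 2) / (2 * (lam ^ 2 * cl ^ 2))) = 1 ^ 2 := by
    field_simp
  refine Tendsto.of_sq_of_nonneg hRpos zero_le_one (hlim ▸ hquot.congr' ?_)
  filter_upwards [eventually_ne_atTop 0] with n hn
  have hn' : (n : ℝ) ≠ 0 := Nat.cast_ne_zero.mpr hn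
  rw [hR, Pi.div_apply]
  field_simp [(hslpos n).ne']
end

section
/- For the real recurrence x_{n+1} = x_n + 1/x_n with arbitrary initial value x_0 > 0, the sequence satisfies lim_{n→∞} x_n/√(2n) = 1. -/
/-!
Squaring the recurrence gives `x (n+1)² = x n² + 2 + 1 / x n²`. Hence `x n² ≥ 2 n` grows without
bound, the increments of `x n²` tend to `2`, and by Cesàro `x n² / n → 2`; taking square roots
gives the claim.
-/

open Filter Finset Topology

theorem Filter.Tendsto.div_natCast_of_sub_succ {u : ℕ → ℝ} {l : ℝ}
    (h : Tendsto (fun n => u (n + 1) - u n) atTop (𝓝 l)) :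
    Tendsto (fun n : ℕ => u n / n) atTop (𝓝 l) := by
  have hmean : Tendsto (fun n : ℕ => (u n - u 0) / n) atTop (𝓝 l) := by
    refine h.cesaro.congr fun n => ?_
    rw [sum_range_sub u n, div_eq_inv_mul]
  have hinit : Tendsto (fun n : ℕ => u 0 / n) atTop (𝓝 0) :=
    tendsto_const_div_atTop_nhds_zero_nat (u 0)
  simpa [← add_div] using hmean.add hinit

theorem Filter.Tendsto.div_sqrt_of_sq_div {ι : Type*} {F : Filter ι} {f g : ι → ℝ}
    (hf : ∀ i, 0 ≤ f i) (h : Tendsto (fun i => f i ^ 2 / g i) F (𝓝 1)) :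
    Tendsto (fun i => f i / √(g i)) F (𝓝 1) := by
  have hsqrt := (Real.continuous_sqrt.tendsto 1).comp h
  rw [Real.sqrt_one] at hsqrt
  refine hsqrt.congr fun i => ?_
  rw [Function.comp_apply, Real.sqrt_div (sq_nonneg _), Real.sqrt_sq (hf i)]

theorem add_one_div_sq_sub_sq {a : ℝ} (ha : a ≠ 0) : (a + 1 / a) ^ 2 - a ^ 2 = 2 + 1 / a ^ 2 := by
  field_simp
  ring

section AddInvRecurrence

variable {x : ℕ → ℝ} (hx0 : 0 < x 0) (hx : ∀ n, x (n + 1) = x n + 1 / x n)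
include hx0 hx

theorem pos_of_add_one_div_recurrence (n : ℕ) : 0 < x n := by
  induction n with
  | zero => exact hx0
  | succ n ih => rw [hx]; positivity

theorem sq_succ_sub_sq_of_add_one_div_recurrence (n : ℕ) :
    x (n + 1) ^ 2 - x n ^ 2 = 2 + 1 / x n ^ 2 := by
  rw [hx, add_one_div_sq_sub_sq (pos_of_add_one_div_recurrence hx0 hx n).ne']

theorem two_mul_le_sq_of_add_one_div_recurrence (n : ℕ) : 2 * (n : ℝ) ≤ x n ^ 2 := by
  induction n with
  | zero => simpa using sq_nonneg (x 0)
  | succ n ih =>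
    have hstep := sq_succ_sub_sq_of_add_one_div_recurrence hx0 hx n
    have hinv : 0 < 1 / x n ^ 2 := by
      have := pos_of_add_one_div_recurrence hx0 hx n
      positivity
    push_cast
    linarith

theorem tendsto_sq_succ_sub_sq_of_add_one_div_recurrence :
    Tendsto (fun n => x (n + 1) ^ 2 - x n ^ 2) atTop (𝓝 2) := by
  have hsq : Tendsto (fun n => x n ^ 2) atTop atTop :=
    tendsto_atTop_mono (two_mul_le_sq_of_add_one_div_recurrence hx0 hx)
      (tendsto_natCast_atTop_atTop.const_mul_atTop two_pos)
  have hinv : Tendsto (fun n => 1 / x n ^ 2) atTop (𝓝 0) := by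
    simpa only [one_div, Pi.inv_def] using hsq.inv_tendsto_atTop
  simp only [sq_succ_sub_sq_of_add_one_div_recurrence hx0 hx]
  simpa using tendsto_const_nhds.add hinv

end AddInvRecurrence

/-- For the recurrence `x (n+1) = x n + 1 / x n` with `x 0 > 0`, one has
`x n / √(2 n) → 1`. -/
theorem recurrence_div_sqrt_two_n_tendsto_one
    (x : ℕ → ℝ) (hx0 : 0 < x 0)
    (hx : ∀ n, x (n + 1) = x n + 1 / x n) :
    Filter.Tendsto (fun n : ℕ => x n / Real.sqrt (2 * n)) Filter.atTop (nhds 1) := by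
  have hratio : Tendsto (fun n : ℕ => x n ^ 2 / n) atTop (𝓝 2) :=
    (tendsto_sq_succ_sub_sq_of_add_one_div_recurrence hx0 hx).div_natCast_of_sub_succ
  refine Tendsto.div_sqrt_of_sq_div (fun n => (pos_of_add_one_div_recurrence hx0 hx n).le) ?_
  have hhalf := hratio.div_const 2
  rw [div_self two_ne_zero] at hhalf
  refine hhalf.congr fun n => ?_
  rw [div_div, mul_comm]
end

section
/- For the real recurrence x_{n+1} = x_n + 1/x_n with x_1 > 0, for every i ≥ 2 one has the two-sided bound 2(i−1) ≤ x_i² ≤ 2i + log(i−1) + γ, where γ := x_1² + 1/x_1² − 2. -/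
/-!
Squaring the recurrence gives `x (n+1)^2 = x n^2 + 2 + 1 / x n^2`. Dropping the positive last
term gives the lower bound `x n^2 ≥ 2 (n - 1)`. Feeding that back in, `1 / x n^2 ≤ 1 / n` for
`n ≥ 2`, and `1 / n ≤ log n - log (n - 1)`, so the accumulated error terms telescope into
`log (i - 1)`; the constant `γ` is exactly what makes the bound an equality at `i = 2`.
-/

open Real

lemma Real.log_add_sub_div_le_log {s t : ℝ} (hs : 0 < s) (ht : 0 < t) :
    log s + (t - s) / t ≤ log t := by
  have h := one_sub_inv_le_log_of_pos (div_pos ht hs)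
  rw [log_div ht.ne' hs.ne', inv_div, one_sub_div ht.ne'] at h
  linarith

lemma add_one_div_sq {a : ℝ} (ha : a ≠ 0) : (a + 1 / a) ^ 2 = a ^ 2 + 2 + 1 / a ^ 2 := by
  field_simp
  ring

section Recurrence

variable {x : ℕ → ℝ} (hx1 : 0 < x 1) (hx : ∀ n, 1 ≤ n → x (n + 1) = x n + 1 / x n)
include hx1 hx

lemma recurrence_pos {n : ℕ} (hn : 1 ≤ n) : 0 < x n := by
  induction n, hn using Nat.le_induction with
  | base => exact hx1
  | succ m hm ih =>
    rw [hx m hm]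
    positivity

lemma recurrence_sq_succ {n : ℕ} (hn : 1 ≤ n) :
    x (n + 1) ^ 2 = x n ^ 2 + 2 + 1 / x n ^ 2 := by
  rw [hx n hn, add_one_div_sq (recurrence_pos hx1 hx hn).ne']

lemma recurrence_sq_lower {n : ℕ} (hn : 1 ≤ n) : 2 * ((n : ℝ) - 1) ≤ x n ^ 2 := by
  induction n, hn using Nat.le_induction with
  | base => norm_num [sq_nonneg]
  | succ m hm ih =>
    have : 0 < 1 / x m ^ 2 := by
      have := recurrence_pos hx1 hx hm
      positivity
    rw [recurrence_sq_succ hx1 hx hm]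
    push_cast
    linarith

lemma recurrence_sq_upper {n : ℕ} (hn : 2 ≤ n) :
    x n ^ 2 ≤ 2 * (n : ℝ) + log ((n : ℝ) - 1) + (x 1 ^ 2 + 1 / x 1 ^ 2 - 2) := by
  induction n, hn using Nat.le_induction with
  | base =>
    rw [recurrence_sq_succ hx1 hx le_rfl]
    norm_num
    linarith
  | succ m hm ih =>
    have hmR : (2 : ℝ) ≤ m := by exact_mod_cast hm
    have hlow := recurrence_sq_lower hx1 hx (n := m) (by omega)
    have hinv : 1 / x m ^ 2 ≤ 1 / (m : ℝ) := one_div_le_one_div_of_le (by linarith) (by linarith)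
    have hlog := log_add_sub_div_le_log (s := (m : ℝ) - 1) (t := m) (by linarith) (by linarith)
    rw [sub_sub_cancel] at hlog
    rw [recurrence_sq_succ hx1 hx (by omega)]
    push_cast
    rw [add_sub_cancel_right]
    linarith

end Recurrence

/-- Two-sided bound for the recurrence `x (n+1) = x n + 1 / x n` (indexed from 1):
for `i ≥ 2`, `2 (i-1) ≤ x i ^ 2 ≤ 2 i + log (i-1) + γ` with
`γ = x 1 ^ 2 + 1 / x 1 ^ 2 - 2`. -/
theorem recurrence_sq_two_sided_bound
    (x : ℕ → ℝ) (hx1 : 0 < x 1)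
    (hx : ∀ n, 1 ≤ n → x (n + 1) = x n + 1 / x n)
    (i : ℕ) (hi : 2 ≤ i) :
    2 * ((i : ℝ) - 1) ≤ (x i) ^ 2 ∧
      (x i) ^ 2 ≤ 2 * (i : ℝ) + Real.log ((i : ℝ) - 1) + ((x 1) ^ 2 + 1 / (x 1) ^ 2 - 2) :=
  ⟨recurrence_sq_lower hx1 hx (by omega), recurrence_sq_upper hx1 hx hi⟩
end

section
/- Gradient norm ratios do not equalize in the gradient flow: for constants c_ℓ, c_k > 0 and k₀ > 0, the gradient norm ratio (c_ℓ/(2c_ℓ²t + k₀)^{1/4}) · ((2c_k²t + k₀)^{1/4}/c_k) converges to √(c_ℓ/c_k) as t → ∞, i.e. the initial ratio c_ℓ/c_k is reduced exactly to its square root in the infinite time limit. -/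
/-!
Once both radicands are positive, the ratio equals `(c_ℓ / c_k) * (B t / A t) ^ (1/4)` with
`A, B` the affine radicands. The quotient of two affine functions tends to the quotient of their
slopes, here `(c_ℓ / c_k)⁻²`, and `x * (x⁻²) ^ (1/4) = √x`.
-/

open Filter Topology

theorem tendsto_affine_div_affine_atTop {a : ℝ} (ha : a ≠ 0) (b k l : ℝ) :
    Tendsto (fun t : ℝ => (b * t + k) / (a * t + l)) atTop (𝓝 (b / a)) := by
  have hinv (c : ℝ) : Tendsto (fun t : ℝ => c / t) atTop (𝓝 0) :=
    tendsto_const_nhds.div_atTop tendsto_id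
  have hlim := ((tendsto_const_nhds (x := b)).add (hinv k)).div
    ((tendsto_const_nhds (x := a)).add (hinv l)) (by simpa using ha)
  rw [add_zero, add_zero] at hlim
  refine hlim.congr' ?_
  filter_upwards [eventually_ne_atTop 0] with t ht
  rw [Pi.div_apply, ← mul_div_mul_right _ _ ht, add_mul, add_mul, div_mul_cancel₀ _ ht,
    div_mul_cancel₀ _ ht]

theorem Real.mul_inv_sq_rpow_quarter {x : ℝ} (hx : 0 ≤ x) :
    x * ((x ^ 2)⁻¹) ^ (1 / 4 : ℝ) = √x := by
  have hsq : (x ^ 2) ^ (1 / 4 : ℝ) = √x := by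
    rw [← Real.rpow_natCast_mul hx, Real.sqrt_eq_rpow]
    norm_num
  rw [Real.inv_rpow (by positivity), hsq, ← div_eq_mul_inv, Real.div_sqrt]

theorem gradient_norm_ratio_tendsto_sqrt_general
    (cl ck k0 : ℝ) (hcl : 0 < cl) (hck : 0 < ck) :
    Filter.Tendsto
      (fun t : ℝ =>
        cl / (2 * cl ^ 2 * t + k0) ^ ((1 : ℝ) / 4) *
          ((2 * ck ^ 2 * t + k0) ^ ((1 : ℝ) / 4) / ck))
      Filter.atTop (nhds (Real.sqrt (cl / ck))) := by
  have hquot : Tendsto (fun t : ℝ => (2 * ck ^ 2 * t + k0) / (2 * cl ^ 2 * t + k0)) atTop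
      (𝓝 ((cl / ck) ^ 2)⁻¹) := by
    convert tendsto_affine_div_affine_atTop (a := 2 * cl ^ 2) (by positivity) (2 * ck ^ 2) k0 k0
      using 2
    field_simp
  have hlim := (hquot.rpow_const (p := 1 / 4) (Or.inr (by norm_num))).const_mul (cl / ck)
  rw [Real.mul_inv_sq_rpow_quarter (by positivity)] at hlim
  have hden (c : ℝ) (hc : 0 < c) : ∀ᶠ t in atTop, 0 < 2 * c ^ 2 * t + k0 :=
    (tendsto_atTop_add_const_right _ k0
      (tendsto_id.const_mul_atTop (by positivity))).eventually_gt_atTop 0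
  refine hlim.congr' ?_
  filter_upwards [hden cl hcl, hden ck hck] with t hl hk
  rw [Real.div_rpow hk.le hl.le]
  field_simp

/-- Gradient norm ratios do not equalize in the gradient flow: the ratio
tends to `√(c_ℓ / c_k)`, the square root of its initial value. -/
theorem gradient_norm_ratio_tendsto_sqrt
    (cl ck k0 : ℝ) (hcl : 0 < cl) (hck : 0 < ck) (hk0 : 0 < k0) :
    Filter.Tendsto
      (fun t : ℝ =>
        cl / (2 * cl ^ 2 * t + k0) ^ ((1 : ℝ) / 4) *
          ((2 * ck ^ 2 * t + k0) ^ ((1 : ℝ) / 4) / ck))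
      Filter.atTop (nhds (Real.sqrt (cl / ck))) :=
  gradient_norm_ratio_tendsto_sqrt_general cl ck k0 hcl hck
end

section
/- Momentum weight norm formula: if g_0 = v_0, g_k = μ·g_{k−1} + v_k, and w_k = w_{k−1} − λ·g_{k−1} for k ≥ 1, where μ ≠ 1 and the vectors w_0, v_0, v_1, …, v_{k−1} are pairwise orthogonal in a real inner product space, then ‖w_k‖² = ‖w_0‖² + λ²·Σ_{j=0}^{k−1} ((1 − μ^{k−j})/(1 − μ))²·‖v_j‖². -/
/-!
Unrolling the momentum recursion gives `g i = ∑_{j ≤ i} μ^(i-j) v j`, and summing the weight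
updates gives `w k = w 0 - λ ∑_{j<k} (∑_{i < k-j} μ^i) v j`: the base gradient `v j` enters every
buffer from step `j` on, with geometric weights. The inner coefficient is the geometric sum
`(1 - μ^(k-j)) / (1 - μ)`, and since `w 0, v 0, v 1, …` are pairwise orthogonal, Pythagoras turns
the norm of this combination into the stated sum of squares.
-/

open Finset RealInnerProductSpace

section Momentum

variable {R M : Type*} [Semiring R] [AddCommMonoid M] [Module R M]

theorem momentum_buffer_eq_sum (μ : R) {v g : ℕ → M} (hg0 : g 0 = v 0)
    (hg : ∀ k, g (k + 1) = μ • g k + v (k + 1)) (k : ℕ) :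
    g k = ∑ j ∈ range (k + 1), μ ^ (k - j) • v j := by
  induction k with
  | zero => simp [hg0]
  | succ k ih =>
    rw [hg, ih, sum_range_succ _ (k + 1), smul_sum, Nat.sub_self, pow_zero, one_smul]
    congr 1
    refine sum_congr rfl fun j hj => ?_
    rw [smul_smul, ← pow_succ', Nat.sub_add_comm (mem_range_succ_iff.mp hj)]

theorem sum_range_momentum_buffer (μ : R) {v g : ℕ → M} (hg0 : g 0 = v 0)
    (hg : ∀ k, g (k + 1) = μ • g k + v (k + 1)) (k : ℕ) :
    ∑ i ∈ range k, g i = ∑ j ∈ range k, (∑ i ∈ range (k - j), μ ^ i) • v j := by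
  induction k with
  | zero => simp
  | succ k ih =>
    have hcoeff : ∀ j ∈ range (k + 1), (∑ i ∈ range (k + 1 - j), μ ^ i) • v j =
        (∑ i ∈ range (k - j), μ ^ i) • v j + μ ^ (k - j) • v j := fun j hj => by
      rw [Nat.sub_add_comm (mem_range_succ_iff.mp hj), sum_range_succ, add_smul]
    rw [sum_range_succ, ih, momentum_buffer_eq_sum μ hg0 hg, sum_congr rfl hcoeff,
      sum_add_distrib, sum_range_succ (fun j => (∑ i ∈ range (k - j), μ ^ i) • v j) k,
      Nat.sub_self, range_zero, sum_empty, zero_smul, add_zero]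

end Momentum

theorem eq_sub_smul_sum_of_forall_eq_sub_smul {R M : Type*} [Ring R] [AddCommGroup M]
    [Module R M] (lam : R) {w g : ℕ → M} (hw : ∀ k, w (k + 1) = w k - lam • g k) (k : ℕ) :
    w k = w 0 - lam • ∑ i ∈ range k, g i := by
  rw [eq_sub_iff_add_eq, ← eq_sub_iff_add_eq', ← sum_range_sub', smul_sum]
  exact sum_congr rfl fun i _ => by rw [hw, sub_sub_cancel]

theorem geom_sum_eq_one_sub_pow_div {K : Type*} [DivisionRing K] {x : K} (hx : x ≠ 1) (n : ℕ) :
    ∑ i ∈ range n, x ^ i = (1 - x ^ n) / (1 - x) :=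
  eq_div_of_mul_eq (sub_ne_zero.mpr hx.symm) (geom_sum_mul_neg x n)

theorem norm_sum_smul_sq_of_pairwise_inner_eq_zero {E ι : Type*} [NormedAddCommGroup E]
    [InnerProductSpace ℝ E] {v : ι → E} (hv : Pairwise fun i j => ⟪v i, v j⟫ = 0) (a : ι → ℝ)
    (s : Finset ι) : ‖∑ i ∈ s, a i • v i‖ ^ 2 = ∑ i ∈ s, a i ^ 2 * ‖v i‖ ^ 2 := by
  classical
  induction s using Finset.induction_on with
  | empty => simp
  | insert j s hj ih =>
    have horth : ⟪a j • v j, ∑ i ∈ s, a i • v i⟫ = 0 := by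
      rw [inner_sum]
      refine sum_eq_zero fun i hi => ?_
      rw [real_inner_smul_left, real_inner_smul_right, hv (ne_of_mem_of_not_mem hi hj).symm,
        mul_zero, mul_zero]
    rw [sum_insert hj, sum_insert hj, norm_add_sq_real, horth, ih, norm_smul, mul_pow,
      Real.norm_eq_abs, sq_abs]
    ring

/-- Momentum weight norm formula: with `μ ≠ 1` and `w 0, v 0, v 1, …` pairwise
orthogonal, `‖w k‖² = ‖w 0‖² + λ² ∑_{j<k} ((1 - μ^(k-j))/(1 - μ))² ‖v j‖²`. -/
theorem momentum_weight_norm_formula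
    {E : Type*} [NormedAddCommGroup E] [InnerProductSpace ℝ E]
    (μ lam : ℝ) (hμ : μ ≠ 1) (v g w : ℕ → E)
    (horth : ∀ i j, i ≠ j → ⟪v i, v j⟫ = 0)
    (horthw : ∀ i, ⟪w 0, v i⟫ = 0)
    (hg0 : g 0 = v 0)
    (hg : ∀ k, g (k + 1) = μ • g k + v (k + 1))
    (hw : ∀ k, w (k + 1) = w k - lam • g k) :
    ∀ k, 1 ≤ k →
      ‖w k‖ ^ 2 =
        ‖w 0‖ ^ 2 +
          lam ^ 2 * ∑ j ∈ Finset.range k, ((1 - μ ^ (k - j)) / (1 - μ)) ^ 2 * ‖v j‖ ^ 2 := by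
  intro k _
  set s := ∑ j ∈ range k, (∑ i ∈ range (k - j), μ ^ i) • v j
  have hw0s : ⟪w 0, s⟫ = 0 := by simp [s, inner_sum, real_inner_smul_right, horthw]
  have hs : ‖s‖ ^ 2 = ∑ j ∈ range k, ((1 - μ ^ (k - j)) / (1 - μ)) ^ 2 * ‖v j‖ ^ 2 := by
    simp only [s, norm_sum_smul_sq_of_pairwise_inner_eq_zero (fun i j => horth i j),
      geom_sum_eq_one_sub_pow_div hμ]
  rw [eq_sub_smul_sum_of_forall_eq_sub_smul lam hw, sum_range_momentum_buffer μ hg0 hg,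
    norm_sub_sq_real, real_inner_smul_right, hw0s, norm_smul, mul_pow, hs, Real.norm_eq_abs,
    sq_abs]
  ring
end
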